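/- arXiv:1501.03932 — 7 statements merged into one kernel-verified Lean document; each statement's English description precedes it below -/
import Mathlib

section
/- On a 3-dimensional manifold, let a bivector field Λ be represented by an (m-2)-form (i.e. 1-form) ω' and a volume form Ω'. Then Λ is a Poisson structure if and only if ω' is completely integrable, i.e. ω'∧dω' = 0. Moreover, at every point q where Λ(q) ≠ 0, the image of Λ(q) equals the kernel of ω'(q). -/
open Matrix

/-- Partial derivative in the `i`-th coordinate direction on `K³`. -/
noncomputable def pd3 {K : Type*} [RCLike K] (i : Fin 3) (f : (Fin 3 → K) → K)
    (x : Fin 3 → K) : K :=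
  fderiv K f x (Pi.single i 1)

/-- The gradient covector of a function on `K³`. -/
noncomputable def grad3 {K : Type*} [RCLike K] (f : (Fin 3 → K) → K) (x : Fin 3 → K) :
    Fin 3 → K :=
  fun i => pd3 i f x

/-- The curl of a 1-form `Σ wᵢ dxᵢ` on `K³`, i.e. the vector representing its exterior
derivative (`dω = λ∧ω` etc. are expressed through it). -/
noncomputable def curl3 {K : Type*} [RCLike K] (w : (Fin 3 → K) → (Fin 3 → K))
    (x : Fin 3 → K) : Fin 3 → K :=
  ![pd3 1 (fun y => w y 2) x - pd3 2 (fun y => w y 1) x,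
    pd3 2 (fun y => w y 0) x - pd3 0 (fun y => w y 2) x,
    pd3 0 (fun y => w y 1) x - pd3 1 (fun y => w y 0) x]

/-- The Poisson-type bracket of functions induced by the bivector `Λ` represented by the
1-form `ω' = Σ wᵢ dxᵢ` and the volume form `Ω' = ρ dx₁∧dx₂∧dx₃`:
`{f,g} = Λ(df,dg) = (∇f × ∇g)·w / ρ`. -/
noncomputable def pb3 {K : Type*} [RCLike K] (w : (Fin 3 → K) → (Fin 3 → K))
    (ρ : (Fin 3 → K) → K) (f g : (Fin 3 → K) → K) (x : Fin 3 → K) : K :=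
  (crossProduct (grad3 f x) (grad3 g x)) ⬝ᵥ w x / ρ x

set_option maxHeartbeats 4000000
section Aux
variable {K : Type*} [RCLike K]

lemma contDiff_pd3 {f : (Fin 3 → K) → K} (hf : ContDiff K (⊤ : ℕ∞) f) (i : Fin 3) :
    ContDiff K (⊤ : ℕ∞) (pd3 i f) :=
  (hf.fderiv_right (by simp)).clm_apply contDiff_const

lemma contDiff_wl {w : (Fin 3 → K) → (Fin 3 → K)} (hw : ContDiff K (⊤ : ℕ∞) w) (l : Fin 3) :
    ContDiff K (⊤ : ℕ∞) (fun y => w y l) :=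
  contDiff_pi.1 hw l

lemma pd3_comm {f : (Fin 3 → K) → K} (hf : ContDiff K (⊤ : ℕ∞) f) (i j : Fin 3) (x : Fin 3 → K) :
    pd3 i (pd3 j f) x = pd3 j (pd3 i f) x := by
  have hsym := (hf.contDiffAt (x := x)).isSymmSndFDerivAt (by simp; exact WithTop.coe_le_coe.mpr le_top)
  have hdf : DifferentiableAt K (fderiv K f) x :=
    ((hf.fderiv_right (m := (⊤ : ℕ∞)) (by simp)).differentiable (by simp)).differentiableAt
  have key : ∀ v u : Fin 3 → K, fderiv K (fun y => fderiv K f y v) x u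
      = fderiv K (fderiv K f) x u v := by
    intro v u
    rw [fderiv_clm_apply hdf (differentiableAt_const _)]
    simp
  have e1 : pd3 j f = fun y => fderiv K f y (Pi.single j 1) := rfl
  have e2 : pd3 i f = fun y => fderiv K f y (Pi.single i 1) := rfl
  rw [pd3, pd3, e1, e2, key, key]
  exact hsym _ _

lemma pd3_add {u v : (Fin 3 → K) → K} {x : Fin 3 → K} (hu : DifferentiableAt K u x)
    (hv : DifferentiableAt K v x) (i : Fin 3) :
    pd3 i (fun y => u y + v y) x = pd3 i u x + pd3 i v x := by
  rw [pd3, fderiv_fun_add hu hv]; simp [pd3]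

lemma pd3_sub {u v : (Fin 3 → K) → K} {x : Fin 3 → K} (hu : DifferentiableAt K u x)
    (hv : DifferentiableAt K v x) (i : Fin 3) :
    pd3 i (fun y => u y - v y) x = pd3 i u x - pd3 i v x := by
  rw [pd3, fderiv_fun_sub hu hv]; simp [pd3]

lemma pd3_mul {u v : (Fin 3 → K) → K} {x : Fin 3 → K} (hu : DifferentiableAt K u x)
    (hv : DifferentiableAt K v x) (i : Fin 3) :
    pd3 i (fun y => u y * v y) x = pd3 i u x * v x + u x * pd3 i v x := by
  rw [pd3, fderiv_fun_mul hu hv]; simp [pd3]; ring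

lemma pd3_div {u v : (Fin 3 → K) → K} {x : Fin 3 → K} (hu : DifferentiableAt K u x)
    (hv : DifferentiableAt K v x) (hv0 : v x ≠ 0) (i : Fin 3) :
    pd3 i (fun y => u y / v y) x = (pd3 i u x * v x - u x * pd3 i v x) / (v x)^2 := by
  have hinv : ∀ y, u y / v y = u y * (v y)⁻¹ := fun y => div_eq_mul_inv _ _
  simp only [hinv]
  have hvinv : DifferentiableAt K (fun y => (v y)⁻¹) x := hv.inv hv0
  rw [pd3_mul hu hvinv]
  have : pd3 i (fun y => (v y)⁻¹) x = -pd3 i v x / (v x)^2 := by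
    have h1 : HasFDerivAt v (fderiv K v x) x := hv.hasFDerivAt
    have h2 := (hasDerivAt_inv hv0).comp_hasFDerivAt x h1
    have h2' : HasFDerivAt (fun y => (v y)⁻¹) (-(v x ^ 2)⁻¹ • fderiv K v x) x := h2
    rw [pd3, h2'.fderiv]
    simp [pd3]; ring
  rw [this]
  field_simp
  ring

lemma pd3_proj (i j : Fin 3) (x : Fin 3 → K) :
    pd3 i (fun y : Fin 3 → K => y j) x = (Pi.single i 1 : Fin 3 → K) j := by
  rw [pd3]
  have : fderiv K (fun y : Fin 3 → K => y j) x
      = ContinuousLinearMap.proj (R := K) (φ := fun _ : Fin 3 => K) j :=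
    (ContinuousLinearMap.proj (R := K) (φ := fun _ : Fin 3 => K) j).hasFDerivAt.fderiv
  rw [this]
  rfl

noncomputable def num3 (w : (Fin 3 → K) → (Fin 3 → K)) (f g : (Fin 3 → K) → K)
    (y : Fin 3 → K) : K :=
  ((pd3 1 f y * pd3 2 g y - pd3 2 f y * pd3 1 g y) * w y 0
  + (pd3 2 f y * pd3 0 g y - pd3 0 f y * pd3 2 g y) * w y 1)
  + (pd3 0 f y * pd3 1 g y - pd3 1 f y * pd3 0 g y) * w y 2

lemma pb3_eq (w : (Fin 3 → K) → (Fin 3 → K)) (ρ : (Fin 3 → K) → K)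
    (f g : (Fin 3 → K) → K) : pb3 w ρ f g = fun y => num3 w f g y / ρ y := by
  funext y
  simp [pb3, num3, grad3, crossProduct, dotProduct, Fin.sum_univ_three]

lemma contDiff_num3 {w : (Fin 3 → K) → (Fin 3 → K)} {f g : (Fin 3 → K) → K}
    (hw : ContDiff K (⊤ : ℕ∞) w) (hf : ContDiff K (⊤ : ℕ∞) f) (hg : ContDiff K (⊤ : ℕ∞) g) :
    ContDiff K (⊤ : ℕ∞) (num3 w f g) := by
  unfold num3
  exact ((((contDiff_pd3 hf 1).mul (contDiff_pd3 hg 2)).sub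
      ((contDiff_pd3 hf 2).mul (contDiff_pd3 hg 1))).mul (contDiff_wl hw 0)
    |>.add ((((contDiff_pd3 hf 2).mul (contDiff_pd3 hg 0)).sub
      ((contDiff_pd3 hf 0).mul (contDiff_pd3 hg 2))).mul (contDiff_wl hw 1))
    |>.add ((((contDiff_pd3 hf 0).mul (contDiff_pd3 hg 1)).sub
      ((contDiff_pd3 hf 1).mul (contDiff_pd3 hg 0))).mul (contDiff_wl hw 2)))

lemma pd3_num3 {w : (Fin 3 → K) → (Fin 3 → K)} {f g : (Fin 3 → K) → K}
    (hw : ContDiff K (⊤ : ℕ∞) w) (hf : ContDiff K (⊤ : ℕ∞) f) (hg : ContDiff K (⊤ : ℕ∞) g)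
    (i : Fin 3) (x : Fin 3 → K) :
    pd3 i (num3 w f g) x =
      ((pd3 i (pd3 1 f) x * pd3 2 g x + pd3 1 f x * pd3 i (pd3 2 g) x
        - (pd3 i (pd3 2 f) x * pd3 1 g x + pd3 2 f x * pd3 i (pd3 1 g) x)) * w x 0
        + (pd3 1 f x * pd3 2 g x - pd3 2 f x * pd3 1 g x) * pd3 i (fun y => w y 0) x
      + ((pd3 i (pd3 2 f) x * pd3 0 g x + pd3 2 f x * pd3 i (pd3 0 g) x
        - (pd3 i (pd3 0 f) x * pd3 2 g x + pd3 0 f x * pd3 i (pd3 2 g) x)) * w x 1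
        + (pd3 2 f x * pd3 0 g x - pd3 0 f x * pd3 2 g x) * pd3 i (fun y => w y 1) x))
      + ((pd3 i (pd3 0 f) x * pd3 1 g x + pd3 0 f x * pd3 i (pd3 1 g) x
        - (pd3 i (pd3 1 f) x * pd3 0 g x + pd3 1 f x * pd3 i (pd3 0 g) x)) * w x 2
        + (pd3 0 f x * pd3 1 g x - pd3 1 f x * pd3 0 g x) * pd3 i (fun y => w y 2) x) := by
  have hdf : ∀ j : Fin 3, DifferentiableAt K (pd3 j f) x := fun j =>
    ((contDiff_pd3 hf j).differentiable (by simp)).differentiableAt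
  have hdg : ∀ j : Fin 3, DifferentiableAt K (pd3 j g) x := fun j =>
    ((contDiff_pd3 hg j).differentiable (by simp)).differentiableAt
  have hdw : ∀ l : Fin 3, DifferentiableAt K (fun y => w y l) x := fun l =>
    ((contDiff_wl hw l).differentiable (by simp)).differentiableAt
  unfold num3
  rw [pd3_add, pd3_add, pd3_mul, pd3_mul, pd3_mul, pd3_sub, pd3_sub, pd3_sub,
    pd3_mul, pd3_mul, pd3_mul, pd3_mul, pd3_mul, pd3_mul] <;>
  first
  | rfl
  | exact (hdf _).mul (hdg _)
  | exact ((hdf _).mul (hdg _)).sub ((hdf _).mul (hdg _))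
  | exact (((hdf _).mul (hdg _)).sub ((hdf _).mul (hdg _))).mul (hdw _)
  | exact ((((hdf _).mul (hdg _)).sub ((hdf _).mul (hdg _))).mul (hdw _)).add
      ((((hdf _).mul (hdg _)).sub ((hdf _).mul (hdg _))).mul (hdw _))
  | exact hdf _
  | exact hdg _
  | exact hdw _

lemma pd3_pb3 {w : (Fin 3 → K) → (Fin 3 → K)} {ρ : (Fin 3 → K) → K}
    {f g : (Fin 3 → K) → K} (hw : ContDiff K (⊤ : ℕ∞) w) (hρ : ContDiff K (⊤ : ℕ∞) ρ)
    (hρ0 : ∀ x, ρ x ≠ 0) (hf : ContDiff K (⊤ : ℕ∞) f) (hg : ContDiff K (⊤ : ℕ∞) g)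
    (i : Fin 3) (x : Fin 3 → K) :
    pd3 i (pb3 w ρ f g) x
      = (pd3 i (num3 w f g) x * ρ x - num3 w f g x * pd3 i ρ x) / (ρ x)^2 := by
  rw [pb3_eq]
  exact pd3_div ((contDiff_num3 hw hf hg).differentiable (by simp)).differentiableAt
    (hρ.differentiable (by simp)).differentiableAt (hρ0 x) i

lemma jacobi_master {w : (Fin 3 → K) → (Fin 3 → K)} {ρ : (Fin 3 → K) → K}
    {f g h : (Fin 3 → K) → K} (hw : ContDiff K (⊤ : ℕ∞) w) (hρ : ContDiff K (⊤ : ℕ∞) ρ)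
    (hρ0 : ∀ x, ρ x ≠ 0) (hf : ContDiff K (⊤ : ℕ∞) f) (hg : ContDiff K (⊤ : ℕ∞) g)
    (hh : ContDiff K (⊤ : ℕ∞) h) (x : Fin 3 → K) :
    pb3 w ρ (pb3 w ρ f g) h x + pb3 w ρ (pb3 w ρ g h) f x
      + pb3 w ρ (pb3 w ρ h f) g x
      = (w x ⬝ᵥ curl3 w x) * ((crossProduct (grad3 f x) (grad3 g x)) ⬝ᵥ grad3 h x)
        / (ρ x)^2 := by
  have key : ∀ u v : (Fin 3 → K) → K, ∀ y, pb3 w ρ u v y = num3 w u v y / ρ y := by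
    intro u v y; rw [pb3_eq]
  have unf : ∀ (u v : (Fin 3 → K) → K) (y : Fin 3 → K), num3 w u v y =
      ((pd3 1 u y * pd3 2 v y - pd3 2 u y * pd3 1 v y) * w y 0
      + (pd3 2 u y * pd3 0 v y - pd3 0 u y * pd3 2 v y) * w y 1)
      + (pd3 0 u y * pd3 1 v y - pd3 1 u y * pd3 0 v y) * w y 2 := fun _ _ _ => rfl
  rw [key (pb3 w ρ f g) h x, key (pb3 w ρ g h) f x, key (pb3 w ρ h f) g x,
    unf (pb3 w ρ f g) h x, unf (pb3 w ρ g h) f x, unf (pb3 w ρ h f) g x]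
  simp only [pd3_pb3 hw hρ hρ0 hf hg, pd3_pb3 hw hρ hρ0 hg hh, pd3_pb3 hw hρ hρ0 hh hf,
    pd3_num3 hw hf hg, pd3_num3 hw hg hh, pd3_num3 hw hh hf,
    unf f g, unf g h, unf h f]
  simp only [pd3_comm hf 1 0, pd3_comm hf 2 0, pd3_comm hf 2 1,
    pd3_comm hg 1 0, pd3_comm hg 2 0, pd3_comm hg 2 1,
    pd3_comm hh 1 0, pd3_comm hh 2 0, pd3_comm hh 2 1]
  simp only [curl3, crossProduct, grad3, dotProduct, Fin.sum_univ_three,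
    Matrix.cons_val_zero, Matrix.cons_val_one, Matrix.head_cons,
    Matrix.cons_val_two, Matrix.tail_cons, LinearMap.mk₂_apply]
  field_simp [hρ0 x]
  ring

lemma part2 (w : (Fin 3 → K) → (Fin 3 → K)) (ρ : (Fin 3 → K) → K) (hρ0 : ∀ x, ρ x ≠ 0)
    (q : Fin 3 → K) (hq : ∃ a b : Fin 3 → K, (crossProduct a b) ⬝ᵥ w q ≠ 0) :
    {v : Fin 3 → K | ∃ a : Fin 3 → K, v = (ρ q)⁻¹ • crossProduct (w q) a}
      = {v : Fin 3 → K | w q ⬝ᵥ v = 0} := by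
  obtain ⟨a₀, b₀, hab⟩ := hq
  have hwq : w q 0 ≠ 0 ∨ w q 1 ≠ 0 ∨ w q 2 ≠ 0 := by
    by_contra hcon
    push_neg at hcon
    obtain ⟨h0, h1, h2⟩ := hcon
    apply hab
    simp [dotProduct, Fin.sum_univ_three, h0, h1, h2]
  ext v
  simp only [Set.mem_setOf_eq]
  constructor
  · rintro ⟨a, rfl⟩
    simp [dotProduct, crossProduct, Fin.sum_univ_three, Pi.smul_apply, smul_eq_mul]
    ring
  · intro hv
    simp only [dotProduct, Fin.sum_univ_three] at hv
    rcases hwq with h | h | h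
    · refine ⟨![0, ρ q * v 2 / w q 0, -(ρ q * v 1) / w q 0], ?_⟩
      funext i
      fin_cases i
      · simp [crossProduct, Pi.smul_apply, smul_eq_mul]
        field_simp [hρ0 q, h]
        linear_combination hv
      · simp [crossProduct, Pi.smul_apply, smul_eq_mul]
        field_simp [hρ0 q, h]
        try ring
      · simp [crossProduct, Pi.smul_apply, smul_eq_mul]
        field_simp [hρ0 q, h]
        try ring
    · refine ⟨![-(ρ q * v 2) / w q 1, 0, ρ q * v 0 / w q 1], ?_⟩
      funext i
      fin_cases i
      · simp [crossProduct, Pi.smul_apply, smul_eq_mul]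
        field_simp [hρ0 q, h]
        try ring
      · simp [crossProduct, Pi.smul_apply, smul_eq_mul]
        field_simp [hρ0 q, h]
        linear_combination hv
      · simp [crossProduct, Pi.smul_apply, smul_eq_mul]
        field_simp [hρ0 q, h]
        try ring
    · refine ⟨![ρ q * v 1 / w q 2, -(ρ q * v 0) / w q 2, 0], ?_⟩
      funext i
      fin_cases i
      · simp [crossProduct, Pi.smul_apply, smul_eq_mul]
        field_simp [hρ0 q, h]
        try ring
      · simp [crossProduct, Pi.smul_apply, smul_eq_mul]
        field_simp [hρ0 q, h]
        try ring
      · simp [crossProduct, Pi.smul_apply, smul_eq_mul]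
        field_simp [hρ0 q, h]
        linear_combination hv

end Aux

/-- on a 3-dimensional space, a bivector field `Λ` represented by a 1-form
`ω'` (with coefficient vector `w`) and a volume form `Ω'` (with nowhere-zero coefficient
`ρ`) is Poisson (i.e. its bracket satisfies the Jacobi identity on smooth functions) if
and only if `ω' ∧ dω' = 0`, i.e. `w · curl w = 0`. Moreover, at every point `q` where
`Λ(q) ≠ 0`, the image of `Λ(q)` (the set of Hamiltonian vectors
`v_α = Λ(α,·)(q) = ρ(q)⁻¹ (w(q) × α)`) equals the kernel of `ω'(q)`. -/



theorem stmt_5 {K : Type*} [RCLike K]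
    (w : (Fin 3 → K) → (Fin 3 → K)) (ρ : (Fin 3 → K) → K)
    (hw : ContDiff K (⊤ : ℕ∞) w) (hρ : ContDiff K (⊤ : ℕ∞) ρ) (hρ0 : ∀ x, ρ x ≠ 0) :
    ((∀ f g h : (Fin 3 → K) → K, ContDiff K (⊤ : ℕ∞) f → ContDiff K (⊤ : ℕ∞) g → ContDiff K (⊤ : ℕ∞) h →
        ∀ x, pb3 w ρ (pb3 w ρ f g) h x + pb3 w ρ (pb3 w ρ g h) f x
          + pb3 w ρ (pb3 w ρ h f) g x = 0)
      ↔ (∀ x, w x ⬝ᵥ curl3 w x = 0))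
    ∧ (∀ q : Fin 3 → K, (∃ a b : Fin 3 → K, (crossProduct a b) ⬝ᵥ w q ≠ 0) →
        {v : Fin 3 → K | ∃ a : Fin 3 → K, v = (ρ q)⁻¹ • crossProduct (w q) a}
          = {v : Fin 3 → K | w q ⬝ᵥ v = 0}) := by
  constructor
  · constructor
    · intro hjac x
      have hcoord : ∀ j : Fin 3, ContDiff K (⊤ : ℕ∞) (fun y : Fin 3 → K => y j) :=
        fun j => contDiff_pi.1 contDiff_id j
      have hJ := hjac _ _ _ (hcoord 0) (hcoord 1) (hcoord 2) x
      rw [jacobi_master hw hρ hρ0 (hcoord 0) (hcoord 1) (hcoord 2) x] at hJ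
      have hgrad : ∀ j : Fin 3, grad3 (fun y : Fin 3 → K => y j) x = Pi.single j 1 := by
        intro j; funext i; rw [grad3, pd3_proj]; simp [Pi.single_apply, eq_comm]
      have hone : (crossProduct (grad3 (fun y : Fin 3 → K => y 0) x)
          (grad3 (fun y : Fin 3 → K => y 1) x))
            ⬝ᵥ grad3 (fun y : Fin 3 → K => y 2) x = 1 := by
        simp [hgrad, crossProduct, dotProduct, Fin.sum_univ_three, Pi.single_apply]
      rw [hone, mul_one, div_eq_zero_iff] at hJ
      rcases hJ with hJ | hJ
      · exact hJ
      · exact absurd hJ (pow_ne_zero 2 (hρ0 x))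
    · intro hcurl f g h hf hg hh x
      rw [jacobi_master hw hρ hρ0 hf hg hh x, hcurl x, zero_mul, zero_div]
  · intro q hq
    exact part2 w ρ hρ0 q hq
end

section
/- Let 𝒜 be a Lie algebra with basis {ẽ_1,…,ẽ_m} and structure constants c_{ij}^k. Define ℬ_𝒜 = 𝒜 × 𝒜 × K with bracket [(v,v',s),(w,w',t)] = ([v,w], [v,w'] - [w,v'] + t v' - s w', 0). Then ℬ_𝒜 is a Lie algebra (the bracket is antisymmetric and satisfies the Jacobi identity), has dimension 2m+1, and ℬ_𝒜 is not unimodular. -/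
set_option linter.unreachableTactic false
set_option linter.unnecessarySeqFocus false
set_option linter.unusedTactic false

variable {K A : Type*} [RCLike K] [LieRing A] [LieAlgebra K A]

/-- The bracket of the secondary algebra `ℬ_𝒜 = 𝒜 × 𝒜 × K`:
`[(v,v',s),(w,w',t)] = ([v,w], [v,w'] - [w,v'] + t•v' - s•w', 0)`. -/
noncomputable def secBracket : (A × A × K) →ₗ[K] (A × A × K) →ₗ[K] (A × A × K) :=
  LinearMap.mk₂ K
    (fun x y => (⁅x.1, y.1⁆, ⁅x.1, y.2.1⁆ - ⁅y.1, x.2.1⁆ + y.2.2 • x.2.1 - x.2.2 • y.2.1, 0))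
    (by
      intro m m' p
      refine Prod.ext ?_ (Prod.ext ?_ ?_) <;>
        simp [add_lie, lie_add, add_smul, smul_add] <;> abel)
    (by
      intro c m p
      refine Prod.ext ?_ (Prod.ext ?_ ?_) <;>
        simp [smul_lie, lie_smul, smul_smul, smul_sub, smul_add, mul_comm] <;> try abel)
    (by
      intro m p p'
      refine Prod.ext ?_ (Prod.ext ?_ ?_) <;>
        simp [add_lie, lie_add, add_smul, smul_add] <;> abel)
    (by
      intro c m p
      refine Prod.ext ?_ (Prod.ext ?_ ?_) <;>
        simp [smul_lie, lie_smul, smul_smul, smul_sub, smul_add, mul_comm] <;> try abel)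

/-- the secondary algebra `ℬ_𝒜 = 𝒜 × 𝒜 × K` with the bracket
`[(v,v',s),(w,w',t)] = ([v,w], [v,w'] - [w,v'] + t v' - s w', 0)` is a Lie algebra
(the bracket is antisymmetric and satisfies the Jacobi identity), has dimension
`2m + 1`, and is not unimodular. -/
theorem stmt_9 [FiniteDimensional K A] (m : ℕ) (hm : Module.finrank K A = m) (hm1 : 1 ≤ m) :
    (∀ x y : A × A × K, secBracket x y = - secBracket y x)
    ∧ (∀ x y z : A × A × K,
        secBracket (secBracket x y) z + secBracket (secBracket y z) x
          + secBracket (secBracket z x) y = 0)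
    ∧ Module.finrank K (A × A × K) = 2 * m + 1
    ∧ ¬ (∀ x : A × A × K, LinearMap.trace K (A × A × K) (secBracket x) = 0) := by
  refine ⟨?_, ?_, ?_, ?_⟩
  · intro x y
    refine Prod.ext ?_ (Prod.ext ?_ ?_)
    · simpa [secBracket] using (lie_skew x.1 y.1).symm
    · simp [secBracket]; abel
    · simp [secBracket]
  · intro x y z
    refine Prod.ext ?_ (Prod.ext ?_ ?_)
    · have h := lie_jacobi x.1 y.1 z.1
      simp only [secBracket, LinearMap.mk₂_apply, Prod.fst_add, Prod.fst_zero, lie_lie,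
        ← lie_skew x.1 z.1, ← lie_skew y.1 x.1, ← lie_skew z.1 y.1, lie_neg]
      linear_combination (norm := abel) 2 • h
    · simp [secBracket, lie_lie, lie_sub, sub_lie, lie_smul, smul_lie, lie_add, add_lie,
        smul_sub, smul_add, smul_smul, mul_comm]
      abel
    · simp [secBracket]
  · simp [Module.finrank_prod, hm]; ring
  · intro h
    have h1 := h (0, 0, 1)
    set g : (A × A × K) →ₗ[K] A := (LinearMap.fst K A K).comp (LinearMap.snd K A (A × K))
      with hg
    set ι : A →ₗ[K] (A × A × K) := (LinearMap.inr K A (A × K)).comp (LinearMap.inl K A K)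
      with hι
    have hf : secBracket ((0 : A), (0 : A), (1 : K)) = -(ι.comp g) := by
      ext y <;> simp [secBracket, hg, hι]
    rw [hf, map_neg, neg_eq_zero, LinearMap.trace_comp_comm'] at h1
    have hgι : g.comp ι = LinearMap.id := by ext a <;> simp [hg, hι]
    rw [hgι, LinearMap.trace_id, hm] at h1
    exact (Nat.cast_ne_zero (R := K)).mpr (by omega) h1
end

section
/- Let E = E_1 ⊕ E_2 be an even-dimensional vector space and λ, λ_1 two 2-forms on E with E_2 ⊆ Ker λ, λ_1|_{E_1} = 0 and λ_1|_{E_2} = 0. If the restriction of λ_1 to Ker λ is symplectic (non-degenerate), then λ + λ_1 is symplectic on E. -/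
/-- Lemma 8(a): on `E = E₁ ⊕ E₂` of even dimension, if `λ` and `λ₁` are
2-forms with `E₂ ⊆ Ker λ`, `λ₁|_{E₁} = 0`, `λ₁|_{E₂} = 0`, and `λ₁` restricted to `Ker λ`
is symplectic, then `λ + λ₁` is symplectic. -/
theorem stmt_10 {K E : Type*} [RCLike K] [AddCommGroup E] [Module K E] [FiniteDimensional K E]
    (E1 E2 : Submodule K E) (hcompl : IsCompl E1 E2) (heven : Even (Module.finrank K E))
    (l l1 : E →ₗ[K] E →ₗ[K] K)
    (hl : ∀ v, l v v = 0) (hl1 : ∀ v, l1 v v = 0)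
    (h2 : ∀ v ∈ E2, l v = 0)
    (h11 : ∀ v ∈ E1, ∀ w ∈ E1, l1 v w = 0)
    (h12 : ∀ v ∈ E2, ∀ w ∈ E2, l1 v w = 0)
    (hsymp : ∀ v ∈ LinearMap.ker l, (∀ w ∈ LinearMap.ker l, l1 v w = 0) → v = 0) :
    ∀ v : E, (∀ w : E, l v w + l1 v w = 0) → v = 0 := by
  -- skew-symmetry of l
  have skew : ∀ a b : E, l a b = - l b a := by
    intro a b
    have h := hl (a + b)
    simp only [map_add, LinearMap.add_apply, hl] at h
    linear_combination h
  intro v hv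
  -- decompose v = v1 + v2
  have hvmem : v ∈ E1 ⊔ E2 := by rw [hcompl.sup_eq_top]; trivial
  obtain ⟨v1, hv1, v2, hv2, hsum⟩ := Submodule.mem_sup.mp hvmem
  have hlv2 : l v2 = 0 := h2 v2 hv2
  -- l v = l v1
  have hlv : ∀ w, l v w = l v1 w := by
    intro w
    rw [← hsum]
    simp [map_add, hlv2]
  -- l1 v1 = 0
  have hl1v1 : ∀ w, l1 v1 w = 0 := by
    intro w
    have hwmem : w ∈ E1 ⊔ E2 := by rw [hcompl.sup_eq_top]; trivial
    obtain ⟨w1, hw1, w2, hw2, hws⟩ := Submodule.mem_sup.mp hwmem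
    have hA : l1 v1 w1 = 0 := h11 v1 hv1 w1 hw1
    have hB : l1 v1 w2 = 0 := by
      have h1 := hv w2
      have hlw2 : l v w2 = 0 := by rw [skew, h2 w2 hw2]; simp
      have hC : l1 v2 w2 = 0 := h12 v2 hv2 w2 hw2
      have : l1 v w2 = l1 v1 w2 + l1 v2 w2 := by rw [← hsum]; simp [map_add]
      rw [hlw2, zero_add, this, hC, add_zero] at h1
      exact h1
    rw [← hws, map_add, hA, hB, add_zero]
  -- v2 = 0
  have hv2zero : v2 = 0 := by
    apply hsymp v2 (LinearMap.mem_ker.mpr hlv2)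
    intro w hw
    have hw0 : l w = 0 := LinearMap.mem_ker.mp hw
    have hlvw : l v w = 0 := by rw [skew, hw0]; simp
    have h1 := hv w
    have hdec : l1 v w = l1 v1 w + l1 v2 w := by rw [← hsum]; simp [map_add]
    rw [hlvw, zero_add, hdec, hl1v1 w, zero_add] at h1
    exact h1
  -- v1 ∈ ker l
  have hv1ker : l v1 = 0 := by
    ext w
    have h1 := hv w
    have hdec : l1 v w = l1 v1 w + l1 v2 w := by rw [← hsum]; simp [map_add]
    rw [hdec, hl1v1 w, zero_add, hv2zero] at h1
    simp only [map_zero, LinearMap.zero_apply, add_zero] at h1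
    rw [hlv w] at h1
    simpa using h1
  have hv1zero : v1 = 0 := by
    apply hsymp v1 (LinearMap.mem_ker.mpr hv1ker)
    intro w _
    exact hl1v1 w
  rw [← hsum, hv1zero, hv2zero, add_zero]
end

section
/- Let E = E_1 ⊕ E_2 be an even-dimensional vector space and λ, λ_1 two 2-forms with E_2 ⊆ Ker λ, λ_1|_{E_1} = 0 and λ_1|_{E_2} = 0. If the restriction of λ_1 to Ker λ has corank two and E_1 ∩ Ker(λ_1|_{Ker λ}) has dimension at least one, then λ + λ_1 has corank exactly two on E. -/
/-!
An alternating form `B` on a finite-dimensional space `V` has `dim V + dim Ker B` even: if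
`B u w ≠ 0`, then `V` splits as `span {u, w}` plus the common kernel `W` of `B u` and `B w`,
these are `B`-orthogonal, and `B|_W` has the same kernel as `B`. Since `dim E` is even it is
therefore enough to show `1 ≤ dim Ker (λ + λ₁) ≤ 2`.

Write `N = Ker (λ₁|_{Ker λ})`. A vector of `E₁` lies in `Ker (λ + λ₁)` exactly when it lies in
`N`, and the projection onto `E₂` along `E₁` maps `Ker (λ + λ₁)` into `E₂ ∩ N`. Hence
`dim (E₁ ∩ N) ≤ dim Ker (λ + λ₁) ≤ dim (E₁ ∩ N) + dim (E₂ ∩ N) ≤ dim N = 2`.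
-/

open Module LinearMap

namespace LinearMap.IsAlt

variable {𝕜 V : Type*} [Field 𝕜] [AddCommGroup V] [Module 𝕜 V] {B : V →ₗ[𝕜] V →ₗ[𝕜] 𝕜}

lemma exists_mem_span_pair_prod_apply_eq (hB : B.IsAlt) {u w : V} (huw : B u w ≠ 0)
    (p : 𝕜 × 𝕜) : ∃ x ∈ Submodule.span 𝕜 {u, w}, (B u).prod (B w) x = p := by
  refine ⟨(-(p.2 / B u w)) • u + (p.1 / B u w) • w, Submodule.mem_span_pair.2 ⟨_, _, rfl⟩, ?_⟩
  have hwu : B w u = -B u w := (hB.neg u w).symm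
  ext <;> simp [hB.self_eq_zero, hwu, huw]

lemma finrank_ker_prod_add_two [FiniteDimensional 𝕜 V] (hB : B.IsAlt) {u w : V}
    (huw : B u w ≠ 0) : finrank 𝕜 (ker ((B u).prod (B w))) + 2 = finrank 𝕜 V := by
  have hsurj : Function.Surjective ((B u).prod (B w)) := fun p ↦
    (hB.exists_mem_span_pair_prod_apply_eq huw p).imp fun _ ↦ And.right
  have hrank := finrank_range_add_finrank_ker ((B u).prod (B w))
  rw [range_eq_top.2 hsurj, finrank_top, finrank_prod, finrank_self] at hrank
  omega

lemma finrank_ker_restrict_ker_prod (hB : B.IsAlt) {u w : V} (huw : B u w ≠ 0) :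
    finrank 𝕜 (ker (BilinForm.restrict B (ker ((B u).prod (B w))))) = finrank 𝕜 (ker B) := by
  set W := ker ((B u).prod (B w))
  have hmemW : ∀ x, x ∈ W ↔ B u x = 0 ∧ B w x = 0 := fun x ↦ by simp [W]
  have hcod : Codisjoint W (Submodule.span 𝕜 {u, w}) := by
    refine Submodule.codisjoint_iff_exists_add_eq.2 fun v ↦ ?_
    obtain ⟨x, hx, hxv⟩ := hB.exists_mem_span_pair_prod_apply_eq huw ((B u).prod (B w) v)
    exact ⟨v - x, x, by rw [mem_ker, map_sub, hxv, sub_self], hx, sub_add_cancel v x⟩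
  have horth : ∀ x ∈ W, ∀ y ∈ Submodule.span 𝕜 {u, w}, B x y = 0 := by
    intro x hx y hy
    rw [hmemW, hB.eq_iff, hB.eq_iff (x := w)] at hx
    have hspan : Submodule.span 𝕜 {u, w} ≤ ker (B x) :=
      Submodule.span_le.2 (Set.insert_subset_iff.2 ⟨hx.1, Set.singleton_subset_iff.2 hx.2⟩)
    exact hspan hy
  have hle : ker B ≤ W := fun x hx ↦ by
    rw [mem_ker] at hx
    rw [hmemW, hB.eq_iff, hB.eq_iff (x := w), hx]
    simp
  rw [BilinForm.ker_restrict_eq_of_codisjoint hcod horth]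
  exact (Submodule.comapSubtypeEquivOfLe hle).finrank_eq

theorem even_finrank_add_finrank_ker [FiniteDimensional 𝕜 V] (hB : B.IsAlt) :
    Even (finrank 𝕜 V + finrank 𝕜 (ker B)) := by
  induction hn : finrank 𝕜 V using Nat.strong_induction_on generalizing V with
  | _ n ih =>
  by_cases hB0 : B = 0
  · rw [hB0, ker_zero, finrank_top, hn]
    exact Even.add_self n
  obtain ⟨u, w, huw⟩ : ∃ u w, B u w ≠ 0 := by
    by_contra! h
    exact hB0 (ext₂ h)
  have hW := hB.finrank_ker_prod_add_two huw
  have hW_even :=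
    ih _ (by omega) (B := BilinForm.restrict B (ker ((B u).prod (B w)))) (fun x ↦ hB x) rfl
  rw [hB.finrank_ker_restrict_ker_prod huw] at hW_even
  rw [← hn, ← hW, add_right_comm]
  exact hW_even.add (by decide)

end LinearMap.IsAlt

lemma Submodule.finrank_map_add_finrank_inf_ker {K V W : Type*} [Field K] [AddCommGroup V]
    [Module K V] [AddCommGroup W] [Module K W] (f : V →ₗ[K] W) (S : Submodule K V)
    [FiniteDimensional K S] :
    finrank K (S.map f) + finrank K ↥(S ⊓ ker f) = finrank K S := by
  rw [← range_domRestrict, ← Submodule.map_comap_subtype, Submodule.finrank_map_subtype_eq,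
    ← ker_domRestrict]
  exact finrank_range_add_finrank_ker (f.domRestrict S)

lemma Submodule.finrank_inf_add_finrank_inf_le_of_disjoint {K V : Type*} [Field K]
    [AddCommGroup V] [Module K V] {p q : Submodule K V} (hpq : Disjoint p q) (S : Submodule K V)
    [FiniteDimensional K S] : finrank K ↥(p ⊓ S) + finrank K ↥(q ⊓ S) ≤ finrank K S := by
  have hdisj : p ⊓ S ⊓ (q ⊓ S) = ⊥ := (hpq.mono inf_le_left inf_le_left).eq_bot
  rw [← Submodule.finrank_sup_add_finrank_inf_eq, hdisj, finrank_bot, add_zero]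
  exact Submodule.finrank_mono (sup_le inf_le_right inf_le_right)

namespace LinearMap

variable {K E : Type*} [Field K] [AddCommGroup E] [Module K E]

/-- `Ker (λ₁|_{Ker λ})`, as a subspace of `E`. -/
def kerRestrictKer (l l1 : E →ₗ[K] E →ₗ[K] K) : Submodule K E :=
  ker l ⊓ ker (l1.compl₂ (ker l).subtype)

lemma mem_kerRestrictKer {l l1 : E →ₗ[K] E →ₗ[K] K} {x : E} :
    x ∈ kerRestrictKer l l1 ↔ l x = 0 ∧ ∀ y ∈ ker l, l1 x y = 0 := by
  simp [kerRestrictKer, LinearMap.ext_iff]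

variable {E1 E2 : Submodule K E} {l l1 : E →ₗ[K] E →ₗ[K] K}

lemma inf_ker_add_eq_inf_kerRestrictKer (hcompl : IsCompl E1 E2) (hl : l.IsAlt)
    (h2 : E2 ≤ ker l) (h11 : ∀ v ∈ E1, ∀ w ∈ E1, l1 v w = 0) :
    E1 ⊓ ker (l + l1) = E1 ⊓ kerRestrictKer l l1 := by
  ext v
  simp only [Submodule.mem_inf, mem_ker, mem_kerRestrictKer, and_congr_right_iff]
  intro hv
  constructor
  · intro hker
    have hlv : l v = 0 := ext_on_codisjoint hcompl.codisjoint
      (fun w hw ↦ by simpa [h11 v hv w hw] using LinearMap.congr_fun hker w)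
      (fun w hw ↦ hl.eq_iff.2 (by rw [h2 hw, zero_apply]))
    rw [add_apply, hlv, zero_add] at hker
    exact ⟨hlv, fun y _ ↦ by rw [hker, zero_apply]⟩
  · rintro ⟨hlv, hl1v⟩
    rw [add_apply, hlv, zero_add]
    exact ext_on_codisjoint hcompl.codisjoint (h11 v hv) fun w hw ↦ hl1v w (h2 hw)

lemma projection_mem_kerRestrictKer (hcompl : IsCompl E1 E2) (hl : l.IsAlt)
    (h2 : E2 ≤ ker l) (h11 : ∀ v ∈ E1, ∀ w ∈ E1, l1 v w = 0)
    (h12 : ∀ v ∈ E2, ∀ w ∈ E2, l1 v w = 0) {v : E} (hv : v ∈ ker (l + l1)) :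
    E2.projection E1 hcompl.symm v ∈ kerRestrictKer l l1 := by
  set a := E1.projection E2 hcompl v
  set b := E2.projection E1 hcompl.symm v
  have hab : a + b = v := Submodule.projection_add_projection_eq_self hcompl v
  have hvw : ∀ w, l1 v w = -l v w := fun w ↦
    eq_neg_of_add_eq_zero_right (by simpa using LinearMap.congr_fun hv w)
  have hl1a : l1 a = 0 := by
    refine ext_on_codisjoint hcompl.codisjoint (h11 a (Submodule.projection_apply_mem _ _))
      fun w hw ↦ ?_
    have hlvw : l v w = 0 := hl.eq_iff.2 (by rw [h2 hw, zero_apply])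
    have hl1vw := hvw w
    rw [hlvw, neg_zero, ← hab, map_add, add_apply,
      h12 b (Submodule.projection_apply_mem _ _) w hw, add_zero] at hl1vw
    exact hl1vw
  refine mem_kerRestrictKer.2 ⟨h2 (Submodule.projection_apply_mem _ _), fun y hy ↦ ?_⟩
  have hb : l1 b y = l1 v y := by rw [← hab, map_add, add_apply, hl1a, zero_apply, zero_add]
  rw [hb, hvw, hl.eq_iff.1 (by rw [mem_ker.1 hy, zero_apply]), neg_zero]

lemma finrank_ker_add_le_of_isCompl [FiniteDimensional K E] (hcompl : IsCompl E1 E2)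
    (hl : l.IsAlt) (h2 : E2 ≤ ker l) (h11 : ∀ v ∈ E1, ∀ w ∈ E1, l1 v w = 0)
    (h12 : ∀ v ∈ E2, ∀ w ∈ E2, l1 v w = 0) :
    finrank K (ker (l + l1)) ≤
      finrank K ↥(E1 ⊓ kerRestrictKer l l1) + finrank K ↥(E2 ⊓ kerRestrictKer l l1) := by
  set π := E2.projection E1 hcompl.symm
  have hmap : (ker (l + l1)).map π ≤ E2 ⊓ kerRestrictKer l l1 := by
    rintro _ ⟨v, hv, rfl⟩
    exact ⟨Submodule.projection_apply_mem _ _,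
      projection_mem_kerRestrictKer hcompl hl h2 h11 h12 hv⟩
  have hrank := Submodule.finrank_map_add_finrank_inf_ker π (ker (l + l1))
  rw [Submodule.ker_projection, inf_comm, inf_ker_add_eq_inf_kerRestrictKer hcompl hl h2 h11]
    at hrank
  have hmap_rank := Submodule.finrank_mono hmap
  omega

end LinearMap

/-- Lemma 8(b): on `E = E₁ ⊕ E₂` of even dimension, if `λ, λ₁` are 2-forms
with `E₂ ⊆ Ker λ`, `λ₁|_{E₁} = 0`, `λ₁|_{E₂} = 0`, the restriction of `λ₁` to `Ker λ`
has corank two, and `E₁ ∩ Ker (λ₁|_{Ker λ})` has dimension at least one,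
then `λ + λ₁` has corank exactly two. -/
theorem stmt_11 {K E : Type*} [RCLike K] [AddCommGroup E] [Module K E] [FiniteDimensional K E]
    (E1 E2 : Submodule K E) (hcompl : IsCompl E1 E2) (heven : Even (Module.finrank K E))
    (l l1 : E →ₗ[K] E →ₗ[K] K)
    (hl : ∀ v, l v v = 0) (hl1 : ∀ v, l1 v v = 0)
    (h2 : ∀ v ∈ E2, l v = 0)
    (h11 : ∀ v ∈ E1, ∀ w ∈ E1, l1 v w = 0)
    (h12 : ∀ v ∈ E2, ∀ w ∈ E2, l1 v w = 0)
    (hcorank : Module.finrank K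
      ↥(LinearMap.ker l ⊓ LinearMap.ker (l1.compl₂ (LinearMap.ker l).subtype)) = 2)
    (hE1 : 1 ≤ Module.finrank K
      ↥(E1 ⊓ (LinearMap.ker l ⊓ LinearMap.ker (l1.compl₂ (LinearMap.ker l).subtype)))) :
    Module.finrank K ↥(LinearMap.ker (l + l1)) = 2 := by
  change finrank K (kerRestrictKer l l1) = 2 at hcorank
  change 1 ≤ finrank K ↥(E1 ⊓ kerRestrictKer l l1) at hE1
  have hupper := (finrank_ker_add_le_of_isCompl hcompl hl h2 h11 h12).trans
    (Submodule.finrank_inf_add_finrank_inf_le_of_disjoint hcompl.disjoint _)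
  have hlower : finrank K ↥(E1 ⊓ kerRestrictKer l l1) ≤ finrank K (ker (l + l1)) := by
    rw [← inf_ker_add_eq_inf_kerRestrictKer hcompl hl h2 h11]
    exact Submodule.finrank_mono inf_le_right
  have hparity := IsAlt.even_finrank_add_finrank_ker (B := l + l1) fun v ↦ by
    rw [LinearMap.add_apply, LinearMap.add_apply, hl v, hl1 v, add_zero]
  rw [Nat.even_iff] at heven hparity
  omega
end

section
/- For every n ≥ 2 there exist real numbers a_1,…,a_n, b_1,…,b_n, c_1,…,c_n such that: (I) the a_i are pairwise distinct, the b_i are pairwise distinct, the c_i are pairwise distinct and all c_i are nonzero; (II) Σ a_i = Σ b_i = 0; (III) for every nonzero complex t, at least n-1 of the numbers a_1+t b_1,…,a_n+t b_n are pairwise distinct, and if two of these numbers coincide then 1+t c_i ≠ 0 for all i = 1,…,n. -/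
/-!
Take `x i = 2 ^ i`, which are positive and have pairwise distinct pairwise sums, and put
`a = x - mean x`, `b = mean (x ^ 2) - x ^ 2`, `c = x`. Then
`(a i + t b i) - (a j + t b j) = (x i - x j) (1 - t (x i + x j))`, so two of the numbers
`a i + t b i` coincide only for `t = 1 / (x i + x j)`; this value of `t` determines the pair
`{i, j}`, so removing `i` leaves the others distinct, and since `t > 0`, `1 + t c k > 0`.
-/

open Finset

lemma Nat.log_two_pow_add_two_pow {i j : ℕ} (hij : i < j) : Nat.log 2 (2 ^ i + 2 ^ j) = j := by
  apply Nat.log_eq_of_pow_le_of_lt_pow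
  · exact Nat.le_add_left _ _
  · have : 2 ^ i < 2 ^ j := Nat.pow_lt_pow_right one_lt_two hij
    rw [pow_succ]
    omega

lemma Nat.two_pow_add_two_pow_eq_of_lt {i j k l : ℕ} (hij : i < j) (hkl : k < l)
    (h : 2 ^ i + 2 ^ j = 2 ^ k + 2 ^ l) : i = k ∧ j = l := by
  have hjl : j = l := by
    rw [← Nat.log_two_pow_add_two_pow hij, ← Nat.log_two_pow_add_two_pow hkl, h]
  subst hjl
  exact ⟨Nat.pow_right_injective le_rfl (Nat.add_right_cancel h), rfl⟩

lemma Nat.two_pow_add_two_pow_eq {i j k l : ℕ} (hij : i ≠ j) (hkl : k ≠ l)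
    (h : 2 ^ i + 2 ^ j = 2 ^ k + 2 ^ l) : (i = k ∧ j = l) ∨ (i = l ∧ j = k) := by
  rcases hij.lt_or_gt with hij | hij <;> rcases hkl.lt_or_gt with hkl | hkl
  · exact .inl (two_pow_add_two_pow_eq_of_lt hij hkl h)
  · exact .inr (two_pow_add_two_pow_eq_of_lt hij hkl (by omega))
  · exact .inr (two_pow_add_two_pow_eq_of_lt hij hkl (by omega)).symm
  · exact .inl (two_pow_add_two_pow_eq_of_lt hij hkl (by omega)).symm

lemma exists_card_sub_one_le_injOn {ι β : Type*} [Fintype ι] (f : ι → β)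
    (h : ∀ i j k l, i ≠ j → f i = f j → k ≠ l → f k = f l → (i = k ∧ j = l) ∨ (i = l ∧ j = k)) :
    ∃ S : Finset ι, Fintype.card ι - 1 ≤ #S ∧ Set.InjOn f S := by
  classical
  by_cases hf : Function.Injective f
  · exact ⟨univ, by simp, hf.injOn⟩
  obtain ⟨i, j, hfij, hij⟩ := Function.not_injective_iff.mp hf
  refine ⟨univ.erase i, by simp [card_erase_of_mem], fun p hp q hq hpq => ?_⟩
  simp only [coe_erase, coe_univ, Set.mem_sdiff, Set.mem_univ, Set.mem_singleton_iff,
    true_and] at hp hq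
  by_contra hne
  rcases h p q i j hne hpq hij hfij with ⟨rfl, -⟩ | ⟨-, rfl⟩
  · exact hp rfl
  · exact hq rfl

section Centered

variable {ι : Type*} [Fintype ι]

noncomputable def centered (f : ι → ℝ) : ι → ℝ := fun i => f i - (∑ k, f k) / Fintype.card ι

lemma sum_centered (f : ι → ℝ) : ∑ i, centered f i = 0 := by
  rcases isEmpty_or_nonempty ι with _ | _
  · simp
  · simp only [centered, sum_sub_distrib, sum_const, card_univ, nsmul_eq_mul]
    rw [mul_div_cancel₀ _ (Nat.cast_ne_zero.mpr Fintype.card_ne_zero), sub_self]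

lemma centered_injective {f : ι → ℝ} (hf : Function.Injective f) :
    Function.Injective (centered f) :=
  fun _ _ h => hf (sub_left_injective h)

lemma centered_add_mul_neg_centered_sq_eq_iff (x : ι → ℝ) (t : ℂ) (i j : ι) :
    (centered x i : ℂ) + t * ((-centered (x ^ 2)) i : ℝ) =
        (centered x j : ℂ) + t * ((-centered (x ^ 2)) j : ℝ) ↔
      x i = x j ∨ t * (x i + x j) = 1 := by
  have key : (centered x i : ℂ) + t * ((-centered (x ^ 2)) i : ℝ) -
      ((centered x j : ℂ) + t * ((-centered (x ^ 2)) j : ℝ)) =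
        (x i - x j) * (1 - t * (x i + x j)) := by
    simp only [centered, Pi.neg_apply, Pi.pow_apply]
    push_cast
    ring
  rw [← sub_eq_zero, key, mul_eq_zero, sub_eq_zero, sub_eq_zero, Complex.ofReal_inj, @eq_comm ℂ 1]

variable {x : ι → ℝ}

lemma mul_add_eq_one_of_centered_collision (hx : Function.Injective x) {t : ℂ} {i j : ι}
    (hij : i ≠ j)
    (h : (centered x i : ℂ) + t * ((-centered (x ^ 2)) i : ℝ) =
      (centered x j : ℂ) + t * ((-centered (x ^ 2)) j : ℝ)) :
    t * (x i + x j) = 1 :=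
  ((centered_add_mul_neg_centered_sq_eq_iff x t i j).mp h).resolve_left (hx.ne hij)

lemma exists_card_sub_one_le_injOn_centered (hx : Function.Injective x)
    (hsum : ∀ i j k l, i ≠ j → k ≠ l → x i + x j = x k + x l →
      (i = k ∧ j = l) ∨ (i = l ∧ j = k)) (t : ℂ) :
    ∃ S : Finset ι, Fintype.card ι - 1 ≤ #S ∧
      Set.InjOn (fun i => (centered x i : ℂ) + t * ((-centered (x ^ 2)) i : ℝ)) S := by
  refine exists_card_sub_one_le_injOn _ fun i j k l hij hfij hkl hfkl => hsum i j k l hij hkl ?_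
  have hs₁ := mul_add_eq_one_of_centered_collision hx hij hfij
  have hs₂ := mul_add_eq_one_of_centered_collision hx hkl hfkl
  exact_mod_cast mul_left_cancel₀ (left_ne_zero_of_mul_eq_one hs₁) (hs₁.trans hs₂.symm)

lemma one_add_mul_ne_zero_of_centered_collision (hpos : ∀ i, 0 < x i)
    (hx : Function.Injective x) {t : ℂ} {i j : ι} (hij : i ≠ j)
    (h : (centered x i : ℂ) + t * ((-centered (x ^ 2)) i : ℝ) =
      (centered x j : ℂ) + t * ((-centered (x ^ 2)) j : ℝ)) (k : ι) :
    1 + t * x k ≠ 0 := by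
  have hs := mul_add_eq_one_of_centered_collision hx hij h
  intro hk
  have hzero : ((x i + x j + x k : ℝ) : ℂ) = 0 := by
    push_cast
    linear_combination (↑(x i) + ↑(x j)) * hk - ↑(x k) * hs
  exact (add_pos (add_pos (hpos i) (hpos j)) (hpos k)).ne' (Complex.ofReal_eq_zero.mp hzero)

end Centered

theorem stmt_12_general (n : ℕ) :
    ∃ a b c : Fin n → ℝ,
      (Function.Injective a ∧ Function.Injective b ∧ Function.Injective c ∧ ∀ i, c i ≠ 0)
      ∧ ((∑ i, a i) = 0 ∧ (∑ i, b i) = 0)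
      ∧ (∀ t : ℂ, t ≠ 0 →
          (∃ S : Finset (Fin n), (n - 1 : ℕ) ≤ S.card ∧
            Set.InjOn (fun i => (a i : ℂ) + t * (b i : ℂ)) (S : Set (Fin n)))
          ∧ ((∃ i j : Fin n, i ≠ j ∧ (a i : ℂ) + t * (b i : ℂ) = (a j : ℂ) + t * (b j : ℂ)) →
              ∀ i, (1 : ℂ) + t * (c i : ℂ) ≠ 0)) := by
  let x : Fin n → ℝ := fun i => 2 ^ (i : ℕ)
  have hpos : ∀ i, 0 < x i := fun i => by positivity
  have hinj : Function.Injective x :=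
    (pow_right_injective₀ two_pos (by norm_num)).comp Fin.val_injective
  have hsq : Function.Injective (x ^ 2) :=
    fun i j h => hinj ((sq_eq_sq₀ (hpos i).le (hpos j).le).mp h)
  have hsum : ∀ i j k l, i ≠ j → k ≠ l → x i + x j = x k + x l →
      (i = k ∧ j = l) ∨ (i = l ∧ j = k) := fun i j k l hij hkl h => by
    have h' : (2 : ℝ) ^ (i : ℕ) + 2 ^ (j : ℕ) = 2 ^ (k : ℕ) + 2 ^ (l : ℕ) := h
    simpa only [Fin.ext_iff] using Nat.two_pow_add_two_pow_eq (Fin.val_ne_of_ne hij)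
      (Fin.val_ne_of_ne hkl) (by exact_mod_cast h')
  refine ⟨centered x, -centered (x ^ 2), x,
    ⟨centered_injective hinj, neg_injective.comp (centered_injective hsq), hinj,
      fun i => (hpos i).ne'⟩,
    ⟨sum_centered x, by simp only [Pi.neg_apply, sum_neg_distrib, sum_centered, neg_zero]⟩,
    fun t _ => ⟨?_, ?_⟩⟩
  · simpa using exists_card_sub_one_le_injOn_centered hinj hsum t
  · rintro ⟨i, j, hij, h⟩
    exact one_add_mul_ne_zero_of_centered_collision hpos hinj hij h

/-- existence of families `a, b, c` of real numbers satisfying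
conditions (I), (II), (III) of Lemma 9 of the paper. -/
theorem stmt_12 (n : ℕ) (hn : 2 ≤ n) :
    ∃ a b c : Fin n → ℝ,
      (Function.Injective a ∧ Function.Injective b ∧ Function.Injective c ∧ ∀ i, c i ≠ 0)
      ∧ ((∑ i, a i) = 0 ∧ (∑ i, b i) = 0)
      ∧ (∀ t : ℂ, t ≠ 0 →
          (∃ S : Finset (Fin n), (n - 1 : ℕ) ≤ S.card ∧
            Set.InjOn (fun i => (a i : ℂ) + t * (b i : ℂ)) (S : Set (Fin n)))
          ∧ ((∃ i j : Fin n, i ≠ j ∧ (a i : ℂ) + t * (b i : ℂ) = (a j : ℂ) + t * (b j : ℂ)) →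
              ∀ i, (1 : ℂ) + t * (c i : ℂ) ≠ 0)) :=
  stmt_12_general n
end

section
/- Let 𝒜 be a Lie algebra over K (ℝ or ℂ) and φ a linear endomorphism of 𝒜 with vanishing Nijenhuis torsion, i.e. [φa,φb] + φ²[a,b] - φ[a,φb] - φ[φa,b] = 0 for all a,b. Define [a,b]_1 = [a,φb] + [φa,b] - φ[a,b]. Then [·,·]_1 is a Lie bracket on 𝒜 compatible with [·,·]: for every t ∈ K, [·,·] + t[·,·]_1 is a Lie bracket. Moreover, whenever I + tφ is invertible, (I+tφ) is a Lie algebra isomorphism from (𝒜, [·,·]+t[·,·]_1) to (𝒜, [·,·]), i.e. (I+tφ)([a,b] + t[a,b]_1) = [(I+tφ)a, (I+tφ)b]. -/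
/-- if `φ` is an endomorphism of a Lie algebra with vanishing Nijenhuis
torsion, then `[a,b]₁ = [a,φb] + [φa,b] - φ[a,b]` is a Lie bracket compatible with `[·,·]`
(every `[·,·] + t[·,·]₁` is a Lie bracket), and whenever `I + tφ` is invertible it is a
Lie algebra isomorphism from `(𝒜, [·,·] + t[·,·]₁)` to `(𝒜, [·,·])`. -/
theorem stmt_14 {K L : Type*} [RCLike K] [LieRing L] [LieAlgebra K L]
    (φ : L →ₗ[K] L)
    (hN : ∀ a b : L, ⁅φ a, φ b⁆ + φ (φ ⁅a, b⁆) - φ ⁅a, φ b⁆ - φ ⁅φ a, b⁆ = 0)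
    (br1 : L → L → L)
    (hbr1 : ∀ a b : L, br1 a b = ⁅a, φ b⁆ + ⁅φ a, b⁆ - φ ⁅a, b⁆) :
    (∀ a b : L, br1 a b = - br1 b a)
    ∧ (∀ t : K, ∀ B2 : L → L → L, (∀ a b, B2 a b = ⁅a, b⁆ + t • br1 a b) →
        (∀ a b : L, B2 a b = - B2 b a)
        ∧ (∀ a b c : L, B2 (B2 a b) c + B2 (B2 b c) a + B2 (B2 c a) b = 0))
    ∧ (∀ t : K, Function.Bijective (LinearMap.id + t • φ : L →ₗ[K] L) →
        ∀ a b : L,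
          (LinearMap.id + t • φ : L →ₗ[K] L) (⁅a, b⁆ + t • br1 a b)
            = ⁅(LinearMap.id + t • φ : L →ₗ[K] L) a, (LinearMap.id + t • φ : L →ₗ[K] L) b⁆) := by
  have hφbr : ∀ a b : L, φ (br1 a b) = ⁅φ a, φ b⁆ := by
    intro a b
    rw [hbr1, map_sub, map_add]
    linear_combination (norm := module) - hN a b
  have hanti : ∀ a b : L, br1 a b = - br1 b a := by
    intro a b
    rw [hbr1, hbr1, ← lie_skew b a, ← lie_skew b (φ a), ← lie_skew (φ b) a, map_neg]
    abel
  have haddl : ∀ x y z : L, br1 (x + y) z = br1 x z + br1 y z := by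
    intro x y z; simp only [hbr1, add_lie, map_add, lie_add]; abel
  have hsmull : ∀ (s : K) (x z : L), br1 (s • x) z = s • br1 x z := by
    intro s x z; simp only [hbr1, smul_lie, map_smul, smul_sub, smul_add]
  have key : ∀ (s : K) (a b : L),
      (⁅a, b⁆ + s • br1 a b) + s • φ (⁅a, b⁆ + s • br1 a b)
        = ⁅a + s • φ a, b + s • φ b⁆ := by
    intro s a b
    rw [map_add, map_smul, hφbr, hbr1]
    simp only [lie_add, add_lie, lie_smul, smul_lie]
    module
  have jac : ∀ x y z : L, ⁅⁅x,y⁆,z⁆ + ⁅⁅y,z⁆,x⁆ + ⁅⁅z,x⁆,y⁆ = 0 := by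
    intro x y z
    rw [← lie_skew ⁅x,y⁆ z, ← lie_skew ⁅y,z⁆ x, ← lie_skew ⁅z,x⁆ y]
    linear_combination (norm := module) - lie_jacobi x y z
  refine ⟨hanti, ?_, ?_⟩
  · -- compatibility: every `[·,·] + t[·,·]₁` is a Lie bracket
    intro t B2 hB2
    constructor
    · intro a b
      rw [hB2, hB2, hanti a b, ← lie_skew b a]
      simp only [smul_neg]
      abel
    · intro a b c
      -- Set up the abbreviations for the degree-1 and degree-2 Jacobiators.
      set J1 : L := ⁅br1 a b, c⁆ + br1 ⁅a,b⁆ c + ⁅br1 b c, a⁆ + br1 ⁅b,c⁆ a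
          + ⁅br1 c a, b⁆ + br1 ⁅c,a⁆ b with hJ1def
      set J2 : L := br1 (br1 a b) c + br1 (br1 b c) a + br1 (br1 c a) b with hJ2def
      -- For every scalar s, the Jacobi sum of the deformed bracket equals s•J1 + s²•J2.
      have hTval : ∀ s : K,
          (⁅⁅a,b⁆ + s • br1 a b, c⁆ + s • br1 (⁅a,b⁆ + s • br1 a b) c)
          + (⁅⁅b,c⁆ + s • br1 b c, a⁆ + s • br1 (⁅b,c⁆ + s • br1 b c) a)
          + (⁅⁅c,a⁆ + s • br1 c a, b⁆ + s • br1 (⁅c,a⁆ + s • br1 c a) b)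
          = (⁅⁅a,b⁆,c⁆ + ⁅⁅b,c⁆,a⁆ + ⁅⁅c,a⁆,b⁆) + (s • J1 + (s*s) • J2) := by
        intro s
        simp only [haddl, hsmull, add_lie, smul_lie, hJ1def, hJ2def]
        module
      -- The deformed Jacobi sum is killed by (I + sφ), for every s.
      have main : ∀ s : K,
          s • J1 + (s*s) • J2 + (s*s) • φ J1 + (s*s*s) • φ J2 = 0 := by
        intro s
        have e1 := key s a b
        have e2 := key s b c
        have e3 := key s c a
        have eo1 := key s (⁅a,b⁆ + s • br1 a b) c
        have eo2 := key s (⁅b,c⁆ + s • br1 b c) a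
        have eo3 := key s (⁅c,a⁆ + s • br1 c a) b
        rw [e1] at eo1
        rw [e2] at eo2
        rw [e3] at eo3
        have hT0 :
            ((⁅⁅a,b⁆ + s • br1 a b, c⁆ + s • br1 (⁅a,b⁆ + s • br1 a b) c)
            + (⁅⁅b,c⁆ + s • br1 b c, a⁆ + s • br1 (⁅b,c⁆ + s • br1 b c) a)
            + (⁅⁅c,a⁆ + s • br1 c a, b⁆ + s • br1 (⁅c,a⁆ + s • br1 c a) b))
            + s • φ (((⁅⁅a,b⁆ + s • br1 a b, c⁆ + s • br1 (⁅a,b⁆ + s • br1 a b) c)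
            + (⁅⁅b,c⁆ + s • br1 b c, a⁆ + s • br1 (⁅b,c⁆ + s • br1 b c) a)
            + (⁅⁅c,a⁆ + s • br1 c a, b⁆ + s • br1 (⁅c,a⁆ + s • br1 c a) b))) = 0 := by
          simp only [map_add, map_smul, smul_add] at eo1 eo2 eo3 ⊢
          linear_combination (norm := module) eo1 + eo2 + eo3
            + jac (a + s • φ a) (b + s • φ b) (c + s • φ c)
        rw [hTval s] at hT0
        rw [jac a b c, zero_add] at hT0
        calc s • J1 + (s*s) • J2 + (s*s) • φ J1 + (s*s*s) • φ J2
            = (s • J1 + (s*s) • J2) + s • φ (s • J1 + (s*s) • J2) := by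
              simp only [map_add, map_smul]; module
          _ = 0 := hT0
      -- extract J1 = 0 and J2 = 0 from three evaluations
      have h12 : (2:K) • (J2 + φ J1) = 0 := by
        linear_combination (norm := module) main 1 + main (-1)
      have he : J2 + φ J1 = 0 := by
        rcases smul_eq_zero.mp h12 with h | h
        · exact absurd h two_ne_zero
        · exact h
      have h6 : (6:K) • φ J2 = 0 := by
        linear_combination (norm := module) main 2 - (2:K) • main 1 - h12
      have hv3 : φ J2 = 0 := by
        rcases smul_eq_zero.mp h6 with h | h
        · exact absurd h (by norm_num)
        · exact h
      have hJ1 : J1 = 0 := by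
        linear_combination (norm := module) main 1 - he - hv3
      have hJ2 : J2 = 0 := by
        have := he
        rw [hJ1, map_zero, add_zero] at this
        exact this
      -- conclude
      simp only [hB2]
      rw [hTval t, jac a b c, hJ1, hJ2, smul_zero, smul_zero, add_zero, zero_add]
  · -- the isomorphism property
    intro t _ a b
    simp only [LinearMap.add_apply, LinearMap.smul_apply, LinearMap.id_apply]
    exact key t a b
end

section
/- Let V be an n-dimensional vector space (n ≥ 2), g = Σ_{j=1}^n a_j v_j⊗v_j* ∈ sl(V) diagonal with pairwise distinct eigenvalues a_1,…,a_n (Σ a_j = 0), and τ = Σ_{j=1}^n v_j* ∈ V*. Regard α_g + τ as a 1-form on the affine Lie algebra Aff(V) = gl(V) ⋉ V, where α_g = kil(g,·) is given by the Killing form of sl(V) extended by zero. Then d(α_g + τ) is a symplectic (non-degenerate) 2-form on Aff(V). -/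
/-!
The Killing form of `sl(V)` is `(X, Y) ↦ 2n tr(XY)`, so `d(α_g + τ)((A, u), (B, w))` equals
`-2n tr(g[A, B]) - τ(Aw - Bu)`. If `(A, u)` lies in the kernel, pairing with `(B, 0)` for rank-one
`B` gives `2n [g, A] = τ ⊗ u`. In the eigenbasis of `g` the diagonal of `[g, A]` vanishes while
`τ(vₖ) = 1`, so `u = 0`; then `A` commutes with `g`, hence is diagonal since the eigenvalues are
distinct, and pairing with `(0, w)` gives `τ ∘ A = 0`, which kills the diagonal.
-/

set_option linter.unusedSectionVars false

attribute [local instance 100] LieRing.ofAssociativeRing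

variable (K V : Type*) [RCLike K] [AddCommGroup V] [Module K V] [FiniteDimensional K V]

/-- The special linear Lie algebra `sl(V)` of traceless endomorphisms, as a Lie
subalgebra of `gl(V) = End(V)`. -/
noncomputable def slK : LieSubalgebra K (Module.End K V) :=
  { LinearMap.ker (LinearMap.trace K V) with
    lie_mem' := by
      intro x y _ _
      simp [LinearMap.mem_ker, Ring.lie_def, map_sub, LinearMap.trace_mul_comm] }

lemma mem_slK (B : Module.End K V) : B ∈ slK K V ↔ LinearMap.trace K V B = 0 := Iff.rfl

/-- The projection of `gl(V)` onto `sl(V)` killing the scalar part; composing a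
functional on `sl(V)` with it is the "extension by zero" relative to the decomposition
`gl(V) = 𝕂·id ⊕ sl(V)`. -/
noncomputable def slProj [Nontrivial V] (B : Module.End K V) : slK K V :=
  ⟨B - ((LinearMap.trace K V B) / (Module.finrank K V : K)) • 1, by
    have h0 : ((Module.finrank K V : K)) ≠ 0 := by
      have h1 : 0 < Module.finrank K V := Module.finrank_pos
      exact_mod_cast Nat.cast_ne_zero.mpr h1.ne'
    rw [mem_slK, map_sub, map_smul, LinearMap.trace_one]
    rw [smul_eq_mul, div_mul_cancel₀ _ h0, sub_self]⟩

open LinearMap TensorProduct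

lemma LinearMap.trace_mulLeftRight {R M : Type*} [CommRing R] [AddCommGroup M] [Module R M]
    [Module.Free R M] [Module.Finite R M] (P Q : Module.End R M) :
    trace R (Module.End R M) (mulLeftRight R (P, Q)) = trace R M P * trace R M Q := by
  -- under `End M ≃ M* ⊗ M`, the map `T ↦ P T Q` corresponds to `Qᵀ ⊗ P`
  have hconj : (dualTensorHomEquiv R M M).conj (map (Module.Dual.transpose (R := R) Q) P) =
      mulLeftRight R (P, Q) := by
    ext1 T
    obtain ⟨t, rfl⟩ := (dualTensorHomEquiv R M M).surjective T
    induction t using TensorProduct.induction_on with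
    | zero => simp
    | tmul f m => ext v; simp [LinearEquiv.conj_apply, Module.Dual.transpose_apply]
    | add s t hs ht => simp_all [mul_add, add_mul]
  have h := trace_conj' (M := Module.Dual R M ⊗[R] M) (N := Module.End R M)
    (map (Module.Dual.transpose (R := R) Q) P) (dualTensorHomEquiv R M M)
  rw [trace_tensorProduct', trace_transpose', hconj] at h
  exact h.trans (mul_comm _ _)

lemma LinearMap.trace_ad_comp_ad {R M : Type*} [CommRing R] [AddCommGroup M] [Module R M]
    [Module.Free R M] [Module.Finite R M] (X Y : Module.End R M) :
    trace R (Module.End R M)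
        (LieAlgebra.ad R (Module.End R M) X ∘ₗ LieAlgebra.ad R (Module.End R M) Y) =
      2 * Module.finrank R M * trace R M (X * Y) - 2 * trace R M X * trace R M Y := by
  have hsplit : LieAlgebra.ad R (Module.End R M) X ∘ₗ LieAlgebra.ad R (Module.End R M) Y =
      mulLeftRight R (X * Y, 1) - mulLeftRight R (X, Y) - mulLeftRight R (Y, X) +
        mulLeftRight R (1, Y * X) := by
    ext1 T
    simp only [comp_apply, LieAlgebra.ad_apply, Ring.lie_def, LinearMap.add_apply,
      LinearMap.sub_apply, mulLeftRight_apply]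
    noncomm_ring
  rw [hsplit]
  simp only [map_add, map_sub, trace_mulLeftRight, trace_one]
  rw [trace_mul_comm R Y X]
  ring

lemma killingForm_slK (X Y : slK K V) :
    killingForm K (slK K V) X Y =
      2 * Module.finrank K V * trace K V ((X : Module.End K V) * Y) := by
  set F := LieAlgebra.ad K (Module.End K V) X ∘ₗ LieAlgebra.ad K (Module.End K V) Y
  have hF : ∀ T, F T ∈ (slK K V).toSubmodule := fun T => trace_lie _ _
  have hrestrict : LieAlgebra.ad K (slK K V) X ∘ₗ LieAlgebra.ad K (slK K V) Y =
      F.restrict (fun T _ => hF T) := rfl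
  rw [killingForm_apply_apply, hrestrict]
  refine (trace_restrict_eq_of_forall_mem _ F hF (fun T _ => hF T)).trans ?_
  rw [trace_ad_comp_ad, X.2, Y.2]
  ring

lemma slProj_lie [Nontrivial V] (A B : Module.End K V) :
    slProj K V ⁅A, B⁆ = ⟨⁅A, B⁆, trace_lie A B⟩ :=
  Subtype.ext (by simp [slProj])

lemma LinearMap.trace_mul_lie_smulRight {R M : Type*} [CommRing R] [AddCommGroup M] [Module R M]
    [Module.Free R M] [Module.Finite R M] (g A : Module.End R M) (f : Module.Dual R M) (v : M) :
    trace R M (g * ⁅A, f.smulRight v⁆) = f (⁅g, A⁆ v) := by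
  rw [← trace_lie_mul_eq]
  have : ⁅g, A⁆ * f.smulRight v = f.smulRight (⁅g, A⁆ v) := by ext; simp
  rw [this, trace_smulRight]

section DiagonalBasis

variable {R M ι : Type*} [CommRing R] [AddCommGroup M] [Module R M]
  (b : Module.Basis ι R M) {a : ι → R} {g : Module.End R M}

lemma Module.Basis.repr_apply_of_apply_eq_smul (hg : ∀ k, g (b k) = a k • b k)
    (v : M) (i : ι) :
    b.repr (g v) i = a i * b.repr v i := by
  have : b.coord i ∘ₗ g = a i • b.coord i := b.ext fun k => by
    rcases eq_or_ne k i with rfl | hki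
    · simp [hg]
    · simp [hg, hki]
  simpa using LinearMap.congr_fun this v

lemma Module.Basis.repr_lie_apply_of_apply_eq_smul (hg : ∀ k, g (b k) = a k • b k)
    (A : Module.End R M) (i j : ι) :
    b.repr (⁅g, A⁆ (b j)) i = (a i - a j) * b.repr (A (b j)) i := by
  simp [Ring.lie_def, b.repr_apply_of_apply_eq_smul hg, hg]
  ring

lemma Module.Basis.apply_eq_smul_of_lie_eq_zero [IsDomain R]
    (hg : ∀ k, g (b k) = a k • b k) (ha : Function.Injective a) {A : Module.End R M}
    (hA : ⁅g, A⁆ = 0) (k : ι) :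
    A (b k) = b.repr (A (b k)) k • b k := by
  refine b.ext_elem fun l => ?_
  rcases eq_or_ne l k with rfl | hlk
  · simp
  · have h := b.repr_lie_apply_of_apply_eq_smul hg A l k
    rw [hA] at h
    simpa [hlk.symm, sub_ne_zero.mpr (ha.ne hlk)] using h.symm

end DiagonalBasis

section DiagonalBasisField

variable {F M ι : Type*} [Field F] [AddCommGroup M] [Module F M]
  (b : Module.Basis ι F M) {a : ι → F} {g : Module.End F M}

lemma Module.Basis.eq_zero_of_smul_lie_eq_smulRight (hg : ∀ k, g (b k) = a k • b k)
    (ha : Function.Injective a) {τ : Module.Dual F M} (hτ : ∀ k, τ (b k) = 1)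
    {A : Module.End F M} {u : M} {c : F} (hc : c ≠ 0) (hτA : ∀ w, τ (A w) = 0)
    (hgA : c • ⁅g, A⁆ = τ.smulRight u) :
    A = 0 ∧ u = 0 := by
  have hu : u = 0 := b.ext_elem fun k => by
    have h := congr(b.repr ($hgA (b k)) k)
    rw [LinearMap.smul_apply, map_smul, Finsupp.smul_apply,
      b.repr_lie_apply_of_apply_eq_smul hg, sub_self, zero_mul, smul_zero, smulRight_apply,
      hτ, one_smul] at h
    simpa using h.symm
  have hA : ⁅g, A⁆ = 0 := by
    rwa [hu, smulRight_zero, smul_eq_zero, or_iff_right hc] at hgA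
  refine ⟨b.ext fun k => ?_, hu⟩
  have hk := b.apply_eq_smul_of_lie_eq_zero hg ha hA k
  have h := hτA (b k)
  rw [hk, map_smul, hτ, smul_eq_mul, mul_one] at h
  rw [hk, h, zero_smul, LinearMap.zero_apply]

end DiagonalBasisField

theorem stmt_17 [Nontrivial V] (n : ℕ) (b : Module.Basis (Fin n) K V)
    (a : Fin n → K) (hinj : Function.Injective a)
    (g : Module.End K V) (hg : g = ∑ j, a j • ((b.coord j).smulRight (b j)))
    (hgs : g ∈ slK K V)
    (τ : Module.Dual K V) (hτ : τ = ∑ j, b.coord j)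
    (ρ : Module.End K V × V → K)
    (hρ : ∀ (B : Module.End K V) (w : V),
      ρ (B, w) = killingForm K (slK K V) ⟨g, hgs⟩ (slProj K V B) + τ w) :
    ∀ x : Module.End K V × V,
      (∀ y : Module.End K V × V, ρ (⁅x.1, y.1⁆, x.1 y.2 - y.1 x.2) = 0) → x = 0 := by
  have hgb : ∀ k, g (b k) = a k • b k := fun k => by simp [hg, Finsupp.single_apply]
  have hτb : ∀ k, τ (b k) = 1 := fun k => by simp [hτ, Finsupp.single_apply]
  have hc : (2 * Module.finrank K V : K) ≠ 0 :=
    mul_ne_zero two_ne_zero (Nat.cast_ne_zero.mpr Module.finrank_pos.ne')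
  rintro ⟨A, u⟩ hx
  have hform : ∀ B w, 2 * Module.finrank K V * trace K V (g * ⁅A, B⁆) + τ (A w - B u) = 0 :=
    fun B w => by simpa [hρ, slProj_lie, killingForm_slK] using hx (B, w)
  have hgA : (2 * Module.finrank K V : K) • ⁅g, A⁆ = τ.smulRight u := LinearMap.ext fun v =>
    sub_eq_zero.mp <| (Module.forall_dual_apply_eq_zero_iff K _).mp fun f => by
      have h := hform (f.smulRight v) 0
      rw [trace_mul_lie_smulRight, map_zero, zero_sub, smulRight_apply, map_neg, map_smul,
        smul_eq_mul] at h
      rw [LinearMap.smul_apply, smulRight_apply, map_sub, map_smul, map_smul, smul_eq_mul,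
        smul_eq_mul]
      linear_combination h
  obtain ⟨rfl, rfl⟩ := b.eq_zero_of_smul_lie_eq_smulRight hgb hinj hτb hc
    (fun w => by simpa using hform 0 w) hgA
  rfl
end
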